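/- arXiv:0710.5856 — 3 statements merged into one kernel-verified Lean document; each statement's English description precedes it below -/
import Mathlib

section
/- The entries of M = S̄ S⁻¹, where S is the Vandermonde matrix S_{ij} = Q_i^{j-1} and S̄_{ij} = (j-1) Q_i^{j-1}, are given by: for i ≠ j, M_{ij} = Q_i · ∏_{s≠i,j}(Q_i - Q_s) / ∏_{s≠j}(Q_j - Q_s), and M_{ii} = Q_i · Σ_{s≠i} 1/(Q_i - Q_s). -/
/-!
Row `i` of `S̄` is `Q i` times the derivative at `Q i` of the monomials `X ^ k`. Expanding
`X ^ k = ∑ j, Q j ^ k • L j` in the Lagrange basis of the nodes `Q` gives `S̄ = diag(Q) D S`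
with `D i j = (L j)'(Q i)`, hence `M = diag(Q) D`. The entries of `D` come from the product
rule applied to `L j = ∏_{s ≠ j} (X - Q s) / (Q j - Q s)`: at `Q j` every factor equals `1`,
while at `Q i` with `i ≠ j` only the term differentiating the factor `X - Q i` survives.
-/

open Matrix Finset Polynomial

namespace Polynomial

variable {R : Type*} [CommRing R]

theorem eval_derivative_prod_of_eval_eq_one {ι : Type*} [DecidableEq ι] {s : Finset ι}
    {f : ι → R[X]} {a : R} (hf : ∀ i ∈ s, eval a (f i) = 1) :
    eval a (derivative (∏ i ∈ s, f i)) = ∑ i ∈ s, eval a (derivative (f i)) := by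
  rw [derivative_prod_finset, eval_finsetSum]
  refine sum_congr rfl fun i _ => ?_
  rw [eval_mul, eval_prod, prod_eq_one fun j hj => hf j (mem_of_mem_erase hj), one_mul]

theorem eval_derivative_X_sub_C_mul (a : R) (p : R[X]) :
    eval a (derivative ((X - C a) * p)) = eval a p := by
  simp [derivative_mul]

theorem mul_eval_derivative_X_pow (a : R) (n : ℕ) :
    a * eval a (derivative (X ^ n)) = n * a ^ n := by
  rcases n with _ | n
  · simp
  · rw [derivative_X_pow, eval_mul, eval_C, eval_pow, eval_X, Nat.add_sub_cancel, pow_succ]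
    ring

end Polynomial

namespace Lagrange

variable {F : Type*} [Field F] {ι : Type*} [DecidableEq ι] {s : Finset ι} {v : ι → F}
  {i j : ι}

theorem eval_derivative_basisDivisor (x y z : F) :
    eval z (derivative (basisDivisor x y)) = (x - y)⁻¹ := by
  simp [basisDivisor]

theorem eval_derivative_basis_self (hvs : Set.InjOn v s) (hi : i ∈ s) :
    eval (v i) (derivative (Lagrange.basis s v i)) = ∑ t ∈ s.erase i, (v i - v t)⁻¹ := by
  rw [Lagrange.basis, eval_derivative_prod_of_eval_eq_one]
  · simp only [eval_derivative_basisDivisor]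
  · intro t ht
    exact eval_basisDivisor_left_of_ne
      fun h => (ne_of_mem_erase ht) (hvs (mem_of_mem_erase ht) hi h.symm)

theorem eval_derivative_basis_of_ne (hij : i ≠ j) (hi : i ∈ s) :
    eval (v i) (derivative (Lagrange.basis s v j)) =
      (∏ t ∈ (s.erase i).erase j, (v i - v t)) / ∏ t ∈ s.erase j, (v j - v t) := by
  have hi' : i ∈ s.erase j := mem_erase.mpr ⟨hij, hi⟩
  rw [Lagrange.basis, ← mul_prod_erase _ _ hi', basisDivisor, mul_assoc, derivative_C_mul,
    eval_mul, eval_C, eval_derivative_X_sub_C_mul, eval_prod, ← mul_prod_erase _ _ hi',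
    erase_right_comm, div_eq_mul_inv, mul_inv, prod_congr rfl fun t _ => by
      rw [basisDivisor, eval_mul, eval_C, eval_sub, eval_X, eval_C], prod_mul_distrib,
    prod_inv_distrib]
  ring

variable [Fintype ι]

noncomputable def differentiationMatrix (v : ι → F) : Matrix ι ι F :=
  of fun i j => eval (v i) (derivative (Lagrange.basis univ v j))

theorem differentiationMatrix_mul_vandermonde {n : ℕ} {v : Fin n → F}
    (hv : Function.Injective v) :
    differentiationMatrix v * vandermonde v =
      of fun i (k : Fin n) => eval (v i) (derivative (X ^ (k : ℕ))) := by
  ext i k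
  have hdeg : ((X : F[X]) ^ (k : ℕ)).degree < #(univ : Finset (Fin n)) := by
    rw [degree_X_pow, card_univ, Fintype.card_fin]
    exact_mod_cast k.isLt
  have hinterp := congrArg (fun p => eval (v i) (derivative p)) (eq_interpolate hv.injOn hdeg)
  simp only [interpolate_apply, derivative_sum, derivative_C_mul, eval_finsetSum, eval_mul,
    eval_C, eval_pow, eval_X] at hinterp
  rw [mul_apply, of_apply, hinterp]
  exact sum_congr rfl fun j _ => mul_comm _ _

end Lagrange

theorem stmt_2_general (N : ℕ) (Q : Fin N → ℂ) (hQdist : Function.Injective Q)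
    (S Sbar M : Matrix (Fin N) (Fin N) ℂ)
    (hS : ∀ i j, S i j = Q i ^ (j : ℕ))
    (hSbar : ∀ i j, Sbar i j = (j : ℕ) * Q i ^ (j : ℕ))
    (hM : M = Sbar * S⁻¹) :
    ∀ i j, M i j =
      if i = j then Q i * ∑ s ∈ univ.erase i, 1 / (Q i - Q s)
      else Q i * (∏ s ∈ (univ.erase i).erase j, (Q i - Q s)) /
        ∏ s ∈ univ.erase j, (Q j - Q s) := by
  have hSv : S = vandermonde Q := Matrix.ext hS
  have hSbar' : Sbar = diagonal Q * Lagrange.differentiationMatrix Q * vandermonde Q := by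
    ext i k
    rw [Matrix.mul_assoc, Lagrange.differentiationMatrix_mul_vandermonde hQdist, diagonal_mul,
      of_apply, hSbar, mul_eval_derivative_X_pow]
  have hdet : IsUnit S.det := hSv ▸ (det_vandermonde_ne_zero_iff.mpr hQdist).isUnit
  intro i j
  rw [hM, hSbar', ← hSv, mul_nonsing_inv_cancel_right _ _ hdet, diagonal_mul,
    Lagrange.differentiationMatrix, of_apply]
  split_ifs with hij
  · rw [hij, Lagrange.eval_derivative_basis_self hQdist.injOn (mem_univ j)]
    simp only [one_div]
  · rw [Lagrange.eval_derivative_basis_of_ne hij (mem_univ i), mul_div_assoc]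

/-- Entries of `M = S̄ S⁻¹` where `S` is the Vandermonde matrix `S i j = Q i ^ j`
and `S̄ i j = j * Q i ^ j` (0-indexed): off-diagonal entries are
`Q i * ∏_{s ≠ i,j} (Q i - Q s) / ∏_{s ≠ j} (Q j - Q s)` and diagonal entries are
`Q i * Σ_{s ≠ i} 1/(Q i - Q s)`. -/
theorem stmt_2 (N : ℕ) (Q : Fin N → ℂ) (hQdist : Function.Injective Q)
    (hQ0 : ∀ i, Q i ≠ 0)
    (S Sbar M : Matrix (Fin N) (Fin N) ℂ)
    (hS : ∀ i j, S i j = Q i ^ (j : ℕ))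
    (hSbar : ∀ i j, Sbar i j = (j : ℕ) * Q i ^ (j : ℕ))
    (hM : M = Sbar * S⁻¹) :
    ∀ i j, M i j =
      if i = j then Q i * ∑ s ∈ univ.erase i, 1 / (Q i - Q s)
      else Q i * (∏ s ∈ (univ.erase i).erase j, (Q i - Q s)) /
        ∏ s ∈ univ.erase j, (Q j - Q s) :=
  stmt_2_general N Q hQdist S Sbar M hS hSbar hM
end

section
/- The solutions (a,b,c) of the equation Wr^d(x+a, x³+bx²+c) = 2x(x-A)(x-B) in complex numbers satisfy a = -1/2 - (A+B)/3 ± (1/3)√(A² + B² - AB - 3/4); in particular, for real A, B all solutions (a,b,c) are real if and only if A² + B² - AB - 3/4 ≥ 0. -/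
/-!
Evaluating the identity at `x = 0, 1, -1` forces `b = -3 - 3a - 2(A + B)`, `c = a(1 + b)` and
`(3a + 3/2 + A + B)² = A² + B² - AB - 3/4`, and these three relations already imply the identity
for all `x`. So the admissible values of `a` are `(-3/2 - A - B ± s)/3` with
`s² = A² + B² - AB - 3/4`, and `b, c` are real as soon as `a` is. For real `A, B`, the number `s`
is real exactly when `A² + B² - AB - 3/4 ≥ 0`.
-/

def discreteWronskian {R : Type*} [Ring R] (f g : R → R) (x : R) : R :=
  f x * g (x + 1) - f (x + 1) * g x

theorem discreteWronskian_linear_cubic_eq_iff {K : Type*} [Field K] [CharZero K]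
    (A B a b c : K) :
    (∀ x, discreteWronskian (· + a) (fun x => x ^ 3 + b * x ^ 2 + c) x
        = 2 * x * (x - A) * (x - B)) ↔
      b = -3 - 3 * a - 2 * (A + B) ∧ c = a * (1 + b) ∧
        (3 * a + 3 / 2 + (A + B)) ^ 2 = A ^ 2 + B ^ 2 - A * B - 3 / 4 := by
  unfold discreteWronskian
  constructor
  · intro h
    have h0 := h 0
    have h1 := h 1
    have hm := h (-1)
    refine ⟨?_, ?_, ?_⟩
    · linear_combination (h1 + hm) / 2 - h0
    · linear_combination -h0
    · linear_combination (3 * a / 2) * h1 + (3 * a / 2 + 3 / 2) * hm - (3 * a + 3 / 2) * h0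
  · rintro ⟨rfl, rfl, hsq⟩ x
    linear_combination (-2 * x / 3) * hsq

theorem Complex.exists_ofReal_eq_iff_nonneg_of_sq_eq {z : ℂ} {d : ℝ} (h : z ^ 2 = d) :
    (∃ r : ℝ, z = r) ↔ 0 ≤ d := by
  constructor
  · rintro ⟨r, rfl⟩
    have hr : r ^ 2 = d := by exact_mod_cast h
    exact hr ▸ sq_nonneg r
  · intro hd
    have hz : z ^ 2 = (√d : ℂ) ^ 2 := by rw [h, ← ofReal_pow, Real.sq_sqrt hd]
    rcases sq_eq_sq_iff_eq_or_eq_neg.1 hz with hz | hz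
    · exact ⟨√d, hz⟩
    · exact ⟨-√d, by rw [hz, ofReal_neg]⟩

/-- Solutions `(a,b,c)` of `Wr^d(x+a, x³+bx²+c) = 2x(x-A)(x-B)` satisfy
`a = -1/2 - (A+B)/3 ± (1/3)√(A² + B² - AB - 3/4)`; in particular, for real
`A, B` all solutions `(a,b,c)` are real iff `A² + B² - AB - 3/4 ≥ 0`. -/
theorem stmt_6 (A B : ℂ) :
    (∀ a b c : ℂ,
      (∀ x : ℂ, (x + a) * ((x + 1) ^ 3 + b * (x + 1) ^ 2 + c)
          - (x + 1 + a) * (x ^ 3 + b * x ^ 2 + c)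
          = 2 * x * (x - A) * (x - B)) →
      ∃ s : ℂ, s ^ 2 = A ^ 2 + B ^ 2 - A * B - 3 / 4 ∧
        (a = -1/2 - (A + B) / 3 + s / 3 ∨ a = -1/2 - (A + B) / 3 - s / 3)) ∧
    (∀ (α β : ℝ), A = (α : ℂ) → B = (β : ℂ) →
      ((∀ a b c : ℂ,
          (∀ x : ℂ, (x + a) * ((x + 1) ^ 3 + b * (x + 1) ^ 2 + c)
              - (x + 1 + a) * (x ^ 3 + b * x ^ 2 + c)
              = 2 * x * (x - A) * (x - B)) →
          (∃ r : ℝ, a = (r : ℂ)) ∧ (∃ r : ℝ, b = (r : ℂ)) ∧ (∃ r : ℝ, c = (r : ℂ))) ↔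
        α ^ 2 + β ^ 2 - α * β - 3 / 4 ≥ 0)) := by
  refine ⟨fun a b c h => ?_, fun α β hA hB => ?_⟩
  · obtain ⟨-, -, hsq⟩ := (discreteWronskian_linear_cubic_eq_iff A B a b c).1 h
    exact ⟨3 * a + 3 / 2 + (A + B), hsq, Or.inl (by ring)⟩
  subst hA hB
  have hD : (α : ℂ) ^ 2 + (β : ℂ) ^ 2 - α * β - 3 / 4
      = ((α ^ 2 + β ^ 2 - α * β - 3 / 4 : ℝ) : ℂ) := by
    push_cast; ring
  constructor
  · intro hreal
    obtain ⟨s, hs⟩ :=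
      IsAlgClosed.exists_pow_nat_eq ((α : ℂ) ^ 2 + (β : ℂ) ^ 2 - α * β - 3 / 4) two_pos
    have hsol :=
      (discreteWronskian_linear_cubic_eq_iff (α : ℂ) β ((s - 3 / 2 - (α + β)) / 3) _ _).2
        ⟨rfl, rfl, by rw [← hs]; ring⟩
    obtain ⟨⟨r, hr⟩, -, -⟩ := hreal _ _ _ hsol
    refine (Complex.exists_ofReal_eq_iff_nonneg_of_sq_eq (hs.trans hD)).1
      ⟨3 * r + 3 / 2 + (α + β), ?_⟩
    push_cast
    linear_combination 3 * hr
  · intro hnonneg a b c h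
    obtain ⟨rfl, rfl, hsq⟩ := (discreteWronskian_linear_cubic_eq_iff (α : ℂ) β a b c).1 h
    obtain ⟨t, ht⟩ := (Complex.exists_ofReal_eq_iff_nonneg_of_sq_eq (hsq.trans hD)).2 hnonneg
    obtain ⟨r, rfl⟩ : ∃ r : ℝ, a = r :=
      ⟨(t - 3 / 2 - (α + β)) / 3, by push_cast; linear_combination ht / 3⟩
    exact ⟨⟨r, rfl⟩, ⟨-3 - 3 * r - 2 * (α + β), by push_cast; ring⟩,
      ⟨r * (1 + (-3 - 3 * r - 2 * (α + β))), by push_cast; ring⟩⟩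
end

section
/- If Q_i = Q_j for some i ≠ j, then the discrete Wronskian of p(x,Q_1)Q_1^x, ..., p(x,Q_N)Q_N^x vanishes identically, where p(x,Q) = x^d + Σ_{j=1}^N ∏_{r=1}^{j-1}(Q - Q_r) q_j(x); consequently the function W(x, Q_1,...,Q_N) = (∏_i Q_i^{-x} / ∏_{i<j}(Q_j - Q_i)) · Wr^d(p(x,Q_1)Q_1^x, ..., p(x,Q_N)Q_N^x) extends to a polynomial in the variables x, Q_1, ..., Q_N. -/
/-!
Factor `Q_i^x` out of row `i` of the Wronskian matrix. What remains has entries that are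
polynomials in `x` and the `Q_i`, so we may treat the `Q_i` and `x` as indeterminates. Over
`ℂ[Q_1, …, Q_N, x]` the substitution `Q_j ↦ Q_i` makes rows `i` and `j` equal, so the determinant
is divisible by each `Q_j - Q_i`; these are pairwise non-associate primes, hence the Vandermonde
product `∏_{i<j} (Q_j - Q_i)` divides it as well, and the quotient is the polynomial `W`.
-/

open Finset

namespace MvPolynomial

variable {σ R K : Type*}

theorem X_sub_X_dvd_sub_aeval_update [CommRing R] [DecidableEq σ] (a b : σ)
    (f : MvPolynomial σ R) :
    X a - X b ∣ f - aeval (Function.update X a (X b)) f := by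
  set I := Ideal.span {(X a - X b : MvPolynomial σ R)}
  have hmk : (Ideal.Quotient.mkₐ R I).comp (aeval (Function.update X a (X b))) =
      Ideal.Quotient.mkₐ R I := by
    refine algHom_ext fun s => ?_
    rcases eq_or_ne s a with rfl | hs
    · simpa [Ideal.Quotient.mkₐ_eq_mk, Ideal.Quotient.eq, I] using
        Ideal.mem_span_singleton.mpr ⟨-1, by ring⟩
    · simp [hs]
  exact Ideal.mem_span_singleton.mp (Ideal.Quotient.eq.mp (AlgHom.congr_fun hmk f).symm)

theorem X_sub_X_dvd_of_aeval_update_eq_zero [CommRing R] [DecidableEq σ] {a b : σ}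
    {f : MvPolynomial σ R} (hf : aeval (Function.update (X : σ → MvPolynomial σ R) a (X b)) f = 0) :
    (X a - X b : MvPolynomial σ R) ∣ f := by
  simpa only [hf, sub_zero] using X_sub_X_dvd_sub_aeval_update a b f

theorem prime_X_sub_X [CommRing R] [IsDomain R] [DecidableEq σ] {a b : σ} (h : a ≠ b) :
    Prime (X a - X b : MvPolynomial σ R) := by
  let e := (renameEquiv R (Equiv.optionSubtypeNe a).symm).trans
    (optionEquivLeft R {c : σ // c ≠ a})
  have he : e (X a - X b) = Polynomial.X - Polynomial.C (X ⟨b, h.symm⟩) := by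
    simp [e, Equiv.optionSubtypeNe_symm_of_ne h.symm]
  rw [← MulEquiv.prime_iff e.toMulEquiv]
  exact he ▸ Polynomial.prime_X_sub_C _

section Vandermonde

variable [DecidableEq σ] {n : ℕ} {v : Fin n → σ}

theorem eq_of_X_sub_X_dvd [CommRing R] [Nontrivial R] (hv : Function.Injective v)
    {i j k l : Fin n} (hij : i < j) (hkl : k < l)
    (h : (X (v j) - X (v i) : MvPolynomial σ R) ∣ X (v l) - X (v k)) : i = k ∧ j = l := by
  set φ : MvPolynomial σ R →ₐ[R] MvPolynomial σ R := aeval (Function.update X (v j) (X (v i)))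
  -- the substitution `X (v j) ↦ X (v i)` kills the divisor but not `X (v l) - X (v k)`
  have hφ (m : Fin n) : φ (X (v m)) = if m = j then X (v i) else X (v m) := by
    simp [φ, Function.update_apply, hv.eq_iff]
  have hzero : φ (X (v j) - X (v i)) = 0 := by simp [hφ, hij.ne]
  obtain ⟨c, hc⟩ := h
  have := congrArg φ hc
  rw [map_mul, hzero, zero_mul, map_sub, sub_eq_zero, hφ, hφ] at this
  split_ifs at this <;>
    have := hv (X_injective this) <;> omega

theorem det_vandermonde_X_dvd_of_aeval_update_eq_zero [Field K] (hv : Function.Injective v)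
    {f : MvPolynomial σ K}
    (hf : ∀ i j, i < j → aeval (Function.update (X : σ → MvPolynomial σ K) (v j) (X (v i))) f = 0) :
    (Matrix.vandermonde fun i => (X (v i) : MvPolynomial σ K)).det ∣ f := by
  rw [Matrix.det_vandermonde,
    ← Finset.prod_sigma univ Ioi fun p => (X (v p.2) - X (v p.1) : MvPolynomial σ K)]
  refine Finset.prod_dvd_of_isRelPrime ?_ fun p hp => ?_
  · rintro ⟨i, j⟩ hij ⟨k, l⟩ hkl hne
    simp only [coe_sigma, Set.mem_sigma_iff, coe_univ, Set.mem_univ, coe_Ioi, Set.mem_Ioi,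
      true_and] at hij hkl
    refine ((prime_X_sub_X (hv.ne hij.ne')).irreducible.isRelPrime_iff_not_dvd).mpr fun h => ?_
    obtain ⟨rfl, rfl⟩ := eq_of_X_sub_X_dvd hv hij hkl h
    exact hne rfl
  · simp only [mem_sigma, mem_univ, mem_Ioi, true_and] at hp
    exact X_sub_X_dvd_of_aeval_update_eq_zero (hf _ _ hp)

end Vandermonde

end MvPolynomial

section Wronskian

open MvPolynomial

variable {N : ℕ} (d : ℕ) (q : Fin N → Polynomial ℂ) {S T : Type*} [CommRing S] [Algebra ℂ S]
  [CommRing T] [Algebra ℂ T]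

/-- `p(t, Q)`, over an arbitrary `ℂ`-algebra so that `Q`, the `Q_r` and `t` may be
indeterminates. -/
noncomputable def pValue (Qs : Fin N → S) (Q t : S) : S :=
  t ^ d + ∑ j, (∏ r ∈ univ.filter (· < j), (Q - Qs r)) * Polynomial.aeval t (q j)

/-- The matrix `(p(t + k, Q_i) Q_i^k)_{i,k}`: the discrete Wronskian matrix at `t` with the
factor `Q_i^t` taken out of row `i`. -/
noncomputable def reducedWronskian (Qs : Fin N → S) (t : S) : Matrix (Fin N) (Fin N) S :=
  Matrix.of fun i k => pValue d q Qs (Qs i) (t + k) * Qs i ^ (k : ℕ)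

theorem map_pValue (ψ : S →ₐ[ℂ] T) (Qs : Fin N → S) (Q t : S) :
    ψ (pValue d q Qs Q t) = pValue d q (ψ ∘ Qs) (ψ Q) (ψ t) := by
  simp [pValue, ← Polynomial.aeval_algHom_apply]

theorem reducedWronskian_map (ψ : S →ₐ[ℂ] T) (Qs : Fin N → S) (t : S) :
    (reducedWronskian d q Qs t).map ψ = reducedWronskian d q (ψ ∘ Qs) (ψ t) := by
  ext i k
  simp [reducedWronskian, map_pValue]

theorem det_reducedWronskian_eq_zero {Qs : Fin N → S} {i j : Fin N} (hij : i ≠ j)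
    (hQ : Qs i = Qs j) (t : S) : (reducedWronskian d q Qs t).det = 0 :=
  Matrix.det_zero_of_row_eq hij (by ext k; simp [reducedWronskian, hQ])

theorem det_vandermonde_dvd_det_reducedWronskian :
    (Matrix.vandermonde fun i => (X (Sum.inl i) : MvPolynomial (Fin N ⊕ Unit) ℂ)).det ∣
      (reducedWronskian d q (fun i => X (Sum.inl i)) (X (Sum.inr ()))).det := by
  refine det_vandermonde_X_dvd_of_aeval_update_eq_zero Sum.inl_injective fun i j hij => ?_
  rw [AlgHom.map_det, AlgHom.mapMatrix_apply, reducedWronskian_map]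
  exact det_reducedWronskian_eq_zero d q hij.ne (by simp [hij.ne]) _

theorem det_reducedWronskian_eq_det_vandermonde_mul_eval {P : MvPolynomial (Fin N ⊕ Unit) ℂ}
    (hP : (reducedWronskian d q (fun i => X (Sum.inl i)) (X (Sum.inr ()))).det =
      (Matrix.vandermonde fun i => (X (Sum.inl i) : MvPolynomial (Fin N ⊕ Unit) ℂ)).det * P)
    (Qs : Fin N → ℂ) (x : ℂ) :
    (reducedWronskian d q Qs x).det =
      (Matrix.vandermonde Qs).det * MvPolynomial.eval (Sum.elim Qs fun _ => x) P := by
  set ψ : MvPolynomial (Fin N ⊕ Unit) ℂ →ₐ[ℂ] ℂ := aeval (Sum.elim Qs fun _ => x)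
  have hvand : (Matrix.vandermonde fun i => X (Sum.inl i)).map ψ = Matrix.vandermonde Qs := by
    ext i k
    simp [ψ, Matrix.vandermonde_apply]
  have h := congrArg ψ hP
  rw [map_mul, AlgHom.map_det, AlgHom.map_det, AlgHom.mapMatrix_apply, AlgHom.mapMatrix_apply,
    reducedWronskian_map, hvand] at h
  simpa [ψ, Function.comp_def] using h

theorem prod_cpow_neg_mul_det_wronskian {Qs : Fin N → ℂ} (hQ : ∀ i, Qs i ≠ 0) (x : ℂ) :
    (∏ i, Qs i ^ (-x)) *
      Matrix.det (fun i k : Fin N => pValue d q Qs (Qs i) (x + (k : ℕ)) * Qs i ^ (x + (k : ℕ))) =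
      (reducedWronskian d q Qs x).det := by
  have hrow : Matrix.det (fun i k : Fin N =>
      pValue d q Qs (Qs i) (x + (k : ℕ)) * Qs i ^ (x + (k : ℕ))) =
      (∏ i, Qs i ^ x) * (reducedWronskian d q Qs x).det := by
    rw [← Matrix.det_mul_column]
    congr 1
    ext i k
    simp only [Matrix.of_apply, reducedWronskian, Complex.cpow_add _ _ (hQ i),
      Complex.cpow_natCast]
    ring
  rw [hrow, ← mul_assoc, ← prod_mul_distrib,
    prod_eq_one fun i _ => by rw [← Complex.cpow_add _ _ (hQ i), neg_add_cancel, Complex.cpow_zero],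
    one_mul]

end Wronskian

theorem stmt_8_general (N d : ℕ)
    (q : Fin N → Polynomial ℂ)
    (p : ℂ → ℂ → (Fin N → ℂ) → ℂ)
    (hp : ∀ x Q Qs, p x Q Qs =
      x ^ d + ∑ j : Fin N, (∏ r ∈ univ.filter (· < j), (Q - Qs r)) * (q j).eval x) :
    (∀ Qs : Fin N → ℂ, (∀ i, Qs i ≠ 0) →
      (∃ i j, i ≠ j ∧ Qs i = Qs j) →
      ∀ x : ℂ, Matrix.det
        (fun i j : Fin N => p (x + (j : ℕ)) (Qs i) Qs * Qs i ^ (x + (j : ℕ))) = 0) ∧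
    (∃ P : MvPolynomial (Fin N ⊕ Unit) ℂ,
      ∀ Qs : Fin N → ℂ, Function.Injective Qs → (∀ i, Qs i ≠ 0) →
        ∀ x : ℂ,
          (∏ i, Qs i ^ (-x)) / (∏ i, ∏ j ∈ univ.filter (fun j => i < j), (Qs j - Qs i)) *
            Matrix.det
              (fun i j : Fin N => p (x + (j : ℕ)) (Qs i) Qs * Qs i ^ (x + (j : ℕ)))
          = MvPolynomial.eval (Sum.elim Qs (fun _ => x)) P) := by
  obtain rfl : p = fun x Q Qs => pValue d q Qs Q x := by
    funext x Q Qs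
    simp [hp, pValue]
  refine ⟨fun Qs _ ⟨i, j, hij, hQ⟩ x => Matrix.det_zero_of_row_eq hij (by simp [hQ]), ?_⟩
  obtain ⟨P, hP⟩ := det_vandermonde_dvd_det_reducedWronskian d q
  refine ⟨P, fun Qs hQs hQ0 x => ?_⟩
  simp only [filter_lt_eq_Ioi, ← Matrix.det_vandermonde]
  rw [div_mul_eq_mul_div, prod_cpow_neg_mul_det_wronskian d q hQ0,
    det_reducedWronskian_eq_det_vandermonde_mul_eval d q hP,
    mul_div_cancel_left₀ _ (Matrix.det_vandermonde_ne_zero_iff.mpr hQs)]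

/-- With `p(x,Q) = x^d + Σ_j ∏_{r<j}(Q - Q_r) q_j(x)`: if two of the `Q_i`
coincide, the discrete Wronskian of `p(x,Q_1)Q_1^x, …, p(x,Q_N)Q_N^x` vanishes
identically; consequently `W(x,Q) = (∏ Q_i^{-x} / ∏_{i<j}(Q_j - Q_i)) · Wr^d`
extends to a polynomial in `x, Q_1, …, Q_N`. -/
theorem stmt_8 (N d : ℕ) (hN : 2 ≤ N) (hd : N < d)
    (q : Fin N → Polynomial ℂ) (hq : ∀ j, (q j).degree < d)
    (p : ℂ → ℂ → (Fin N → ℂ) → ℂ)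
    (hp : ∀ x Q Qs, p x Q Qs =
      x ^ d + ∑ j : Fin N, (∏ r ∈ univ.filter (· < j), (Q - Qs r)) * (q j).eval x) :
    (∀ Qs : Fin N → ℂ, (∀ i, Qs i ≠ 0) →
      (∃ i j, i ≠ j ∧ Qs i = Qs j) →
      ∀ x : ℂ, Matrix.det
        (fun i j : Fin N => p (x + (j : ℕ)) (Qs i) Qs * Qs i ^ (x + (j : ℕ))) = 0) ∧
    (∃ P : MvPolynomial (Fin N ⊕ Unit) ℂ,
      ∀ Qs : Fin N → ℂ, Function.Injective Qs → (∀ i, Qs i ≠ 0) →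
        ∀ x : ℂ,
          (∏ i, Qs i ^ (-x)) / (∏ i, ∏ j ∈ univ.filter (fun j => i < j), (Qs j - Qs i)) *
            Matrix.det
              (fun i j : Fin N => p (x + (j : ℕ)) (Qs i) Qs * Qs i ^ (x + (j : ℕ)))
          = MvPolynomial.eval (Sum.elim Qs (fun _ => x)) P) :=
  stmt_8_general N d q p hp
end
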